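/- Let M be a simple binary matroid with no coloops and rank at least two, and let e be a free element of M. Then M is a circuit (its ground set is a circuit). -/

import Mathlib

/-!
Since `e` is not a coloop, it lies outside some base `B`, hence in the fundamental circuit `C`
of `e` with respect to `B`. Freeness makes `C` spanning, so `C - e` is a base and every circuit
through `e` has exactly `r(M) + 1` elements. Suppose some `f` lies outside `C`, and let `C_f` be
its fundamental circuit with respect to `C - e`; simplicity gives `|C_f| ≥ 3`, so `C_f` meets `C`
in at least two elements. Over `GF(2)` the vectors of a circuit sum to zero, so the nonempty set
`C Δ C_f` is dependent and contains a circuit `C'`. If `e ∈ C'` then `|C'| = r(M) + 1` exceeds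
`|C Δ C_f| ≤ |C| - 1`; otherwise `C' ⊆ (C - e) ∪ f`, so `C' = C_f`, which is impossible since
`C_f` meets `C`. Hence the ground set is `C`.
-/

namespace LoosePaper

open Set
open scoped Matroid

variable {α β : Type*}

/-- A circuit of a matroid: a minimal dependent set. -/
def Circuit (M : Matroid α) (C : Set α) : Prop :=
  M.Dep C ∧ ∀ D, M.Dep D → D ⊆ C → D = C

/-- The rank of a matroid: the (common) cardinality of its bases. -/
noncomputable def rank (M : Matroid α) : ℕ :=
  sInf {n | ∃ B, M.IsBase B ∧ B.ncard = n}

/-- An element is loose if every circuit containing it has size at least the rank. -/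
def Loose (M : Matroid α) (e : α) : Prop :=
  e ∈ M.E ∧ ∀ C, Circuit M C → e ∈ C → rank M ≤ C.ncard

/-- An element is free if every circuit containing it is spanning. -/
def FreeElt (M : Matroid α) (e : α) : Prop :=
  e ∈ M.E ∧ ∀ C, Circuit M C → e ∈ C → M.closure C = M.E

/-- A coloop: an element contained in every base. -/
def Coloop (M : Matroid α) (e : α) : Prop :=
  e ∈ M.E ∧ ∀ B, M.IsBase B → e ∈ B

def NoColoops (M : Matroid α) : Prop := ∀ e, ¬ Coloop M e

/-- A matroid is simple if every pair of its elements is independent. -/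
def Simple (M : Matroid α) : Prop :=
  ∀ e ∈ M.E, ∀ f ∈ M.E, M.Indep {e, f}

/-- A matroid is paving if every circuit has size at least the rank. -/
def Paving (M : Matroid α) : Prop :=
  ∀ C, Circuit M C → rank M ≤ C.ncard

/-- `M` is representable over the field `F`. -/
def Representable (M : Matroid α) (F : Type*) [Field F] : Prop :=
  ∃ (ι : Type) (v : α → ι → F),
    ∀ I, I ⊆ M.E → (M.Indep I ↔ LinearIndependent F (fun x : I => v x.1))

/-- `N` is the vector matroid, on ground set all of `η`, of the matrix whose
column labelled by `c : η` is `A c`. -/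
def IsVectorMatroidOn (F : Type*) [Field F] {η ι : Type*} (A : η → ι → F)
    (N : Matroid η) : Prop :=
  N.E = Set.univ ∧ ∀ I : Set η, (N.Indep I ↔ LinearIndependent F (fun x : I => A x.1))

/-- `φ` is an isomorphism from `M` to `N`. -/
def IsIsoTo (M : Matroid α) (N : Matroid β) (φ : α → β) : Prop :=
  Set.BijOn φ M.E N.E ∧ ∀ I, I ⊆ M.E → (M.Indep I ↔ N.Indep (φ '' I))

/-- The matrix `[I_r | D]` of the matroid `M_r`; the column `Sum.inl i` is the
`i`-th standard basis vector, the column `Sum.inr 0` (the distinguished element `z`)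
is the all-ones vector, and for `1 ≤ j ≤ r-1` the column `Sum.inr j` has ones
exactly in rows `0` and `j` (`0`-indexed). -/
def MrMatrix (r : ℕ) : (Fin r ⊕ Fin r) → Fin r → ZMod 2
  | Sum.inl i => fun k => if k = i then 1 else 0
  | Sum.inr j => fun k =>
      if j.val = 0 then 1 else if k.val = 0 ∨ k = j then 1 else 0

/-- The matrix `[I_r | D]` of the matroid `N_r`; the column `Sum.inr 0`
(the distinguished element `z`) is `(0,1,…,1)ᵀ`, and for `1 ≤ j ≤ r-2` the column
`Sum.inr j` has ones exactly in rows `0`, `1` and `j+1` (`0`-indexed). -/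
def NrMatrix (r : ℕ) : (Fin r ⊕ Fin (r - 1)) → Fin r → ZMod 2
  | Sum.inl i => fun k => if k = i then 1 else 0
  | Sum.inr j => fun k =>
      if j.val = 0 then (if k.val = 0 then 0 else 1)
      else if k.val = 0 ∨ k.val = 1 ∨ k.val = j.val + 1 then 1 else 0

/-- The matrix `[I_r | D]` of the matroid `L_r`; the columns of `D` are the all-ones
vector, `(1,1,0,…,0)ᵀ`, `(1,0,1,0,…,0)ᵀ` and `(0,1,1,0,…,0)ᵀ`. -/
def LrMatrix (r : ℕ) : (Fin r ⊕ Fin 4) → Fin r → ZMod 2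
  | Sum.inl i => fun k => if k = i then 1 else 0
  | Sum.inr j => fun k =>
      if j = 0 then 1
      else if j = 1 then (if k.val = 0 ∨ k.val = 1 then 1 else 0)
      else if j = 2 then (if k.val = 0 ∨ k.val = 2 then 1 else 0)
      else if k.val = 1 ∨ k.val = 2 then 1 else 0

/-- The matrix `[I_r | D]` of the matroid `J_r`; the columns of `D` are
`(0,1,1,…,1)ᵀ`, `(1,1,1,0,…,0)ᵀ`, `(1,1,0,1,0,…,0)ᵀ` and `(1,0,1,1,0,…,0)ᵀ`. -/
def JrMatrix (r : ℕ) : (Fin r ⊕ Fin 4) → Fin r → ZMod 2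
  | Sum.inl i => fun k => if k = i then 1 else 0
  | Sum.inr j => fun k =>
      if j = 0 then (if k.val = 0 then 0 else 1)
      else if j = 1 then (if k.val = 0 ∨ k.val = 1 ∨ k.val = 2 then 1 else 0)
      else if j = 2 then (if k.val = 0 ∨ k.val = 1 ∨ k.val = 3 then 1 else 0)
      else if k.val = 0 ∨ k.val = 2 ∨ k.val = 3 then 1 else 0

/-- A matrix over `GF(3)` whose vector matroid is `U_{2,4}`. -/
def U24Matrix : Fin 4 → Fin 2 → ZMod 3
  | 0 => fun k => if k = 0 then 1 else 0
  | 1 => fun k => if k = 1 then 1 else 0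
  | 2 => fun _ => 1
  | 3 => fun k => if k = 0 then 1 else 2

/-- A `GF(3)`-matrix representing the matroid obtained from a circuit
`{e, c_0, …, c_{n-1}}` (where `e` is the element `Sum.inl ()`) by 2-summing a copy
of `U_{2,4}` across each element `c_d` with `d ∈ D`.  For `d ∉ D` the element
`Sum.inr (d, 0)` is `c_d`, and for `d ∈ D` the elements `Sum.inr (d, j)`,
`j = 0, 1, 2`, are the three elements of the copy of `U_{2,4}` other than its
basepoint. -/
def thetaMatrix (n : ℕ) (D : Finset (Fin n)) :
    (Unit ⊕ Fin n × Fin 3) → (Fin n ⊕ Fin n) → ZMod 3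
  | Sum.inl _ => fun row => Sum.elim (fun _ => 1) (fun _ => 0) row
  | Sum.inr (d, j) => fun row =>
      let ed : (Fin n ⊕ Fin n) → ZMod 3 :=
        Sum.elim (fun i => if i = d then 1 else 0) (fun _ => 0)
      let wd : (Fin n ⊕ Fin n) → ZMod 3 :=
        Sum.elim (fun _ => 0) (fun i => if i = d then 1 else 0)
      if d ∈ D then
        (if j = 0 then wd row else if j = 1 then ed row + wd row else ed row - wd row)
      else ed row

/-- The ground set of the 2-sum construction: the circuit element `e`, the
untouched circuit elements `c_d` for `d ∉ D`, and three `U_{2,4}`-elements for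
each `d ∈ D`. -/
def thetaGround (n : ℕ) (D : Finset (Fin n)) : Set (Unit ⊕ Fin n × Fin 3) :=
  {x | ∀ d : Fin n, ∀ j : Fin 3, x = Sum.inr (d, j) → (j = 0 ∨ d ∈ D)}

open scoped symmDiff

theorem _root_.Finset.sum_symmDiff_of_char_two {ι V : Type*} [DecidableEq ι] [AddCommGroup V]
    [Module (ZMod 2) V] (s t : Finset ι) (g : ι → V) :
    ∑ x ∈ s ∆ t, g x = ∑ x ∈ s, g x + ∑ x ∈ t, g x := by
  have hdouble : ∀ x : V, x + x = 0 := fun x => by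
    rw [← two_smul (ZMod 2) x, show (2 : ZMod 2) = 0 from rfl, zero_smul]
  rw [← Finset.sum_union_inter,
    ← Finset.sum_sdiff (Finset.inter_subset_union (s := s) (t := t)), ← Finset.sup_eq_union,
    ← Finset.inf_eq_inter, ← symmDiff_eq_sup_sdiff_inf, add_assoc,
    hdouble, add_zero]

theorem _root_.Finset.eq_empty_of_linearIndepOn_of_sum_eq_zero {ι R V : Type*} [Ring R]
    [Nontrivial R] [AddCommGroup V] [Module R V] {v : ι → V} {s : Finset ι}
    (hs : LinearIndepOn R v s) (hsum : ∑ x ∈ s, v x = 0) : s = ∅ :=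
  s.eq_empty_of_forall_notMem fun i hi =>
    one_ne_zero (linearIndepOn_finset_iff.1 hs (fun _ => (1 : R)) (by simpa using hsum) i hi)

/-- The coefficients of a minimal dependence relation are all nonzero, and over `GF(2)` that
means they are all `1`. -/
theorem _root_.Finset.sum_eq_zero_of_minimal_linearDepOn {ι V : Type*} [DecidableEq ι]
    [AddCommGroup V] [Module (ZMod 2) V] {v : ι → V} {s : Finset ι}
    (hdep : ¬ LinearIndepOn (ZMod 2) v s)
    (hmin : ∀ x ∈ s, LinearIndepOn (ZMod 2) v (s.erase x)) : ∑ x ∈ s, v x = 0 := by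
  obtain ⟨g, hg, i, his, hgi⟩ := not_linearIndepOn_finset_iff.1 hdep
  have hg_ne : ∀ x ∈ s, g x ≠ 0 := fun x hxs hgx => by
    have hi : i ∈ s.erase x := Finset.mem_erase.2 ⟨fun hix => hgi (hix ▸ hgx), his⟩
    refine hgi (linearIndepOn_finset_iff.1 (hmin x hxs) g ?_ i hi)
    rwa [Finset.sum_erase s (by rw [hgx, zero_smul])]
  have hone : ∀ a : ZMod 2, a ≠ 0 → a = 1 := by decide
  rw [← hg]
  exact Finset.sum_congr rfl fun x hx => by rw [hone _ (hg_ne x hx), one_smul]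

theorem _root_.Set.ncard_symmDiff_lt {s t : Set α} {f : α} (hts : t \ {f} ⊆ s)
    (ht : 2 < t.ncard) (hs : s.Finite) : (s ∆ t).ncard < s.ncard := by
  have hsub : s ∆ t ⊆ insert f (s \ (t \ {f})) := by
    rintro x (⟨hxs, hxt⟩ | ⟨hxt, hxs⟩)
    · exact .inr ⟨hxs, fun hx => hxt hx.1⟩
    · exact .inl (by_contra fun hxf => hxs (hts ⟨hxt, hxf⟩))
  have hle := Set.ncard_le_ncard hts hs
  have hpred := Set.pred_ncard_le_ncard_sdiff_singleton t f
  calc (s ∆ t).ncard ≤ (insert f (s \ (t \ {f}))).ncard :=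
        Set.ncard_le_ncard hsub (hs.sdiff.insert f)
    _ ≤ (s \ (t \ {f})).ncard + 1 := Set.ncard_insert_le _ _
    _ = s.ncard - (t \ {f}).ncard + 1 := by rw [Set.ncard_sdiff hts (hs.subset hts)]
    _ < s.ncard := by omega

variable {M : Matroid α} {C C₁ C₂ B : Set α} {e : α}

theorem _root_.Matroid.IsCircuit.isBase_sdiff_singleton (hC : M.IsCircuit C)
    (hCsp : M.closure C = M.E) (he : e ∈ C) : M.IsBase (C \ {e}) :=
  Matroid.isBase_iff_indep_closure_eq.2
    ⟨hC.sdiff_singleton_indep he, by rw [hC.closure_sdiff_singleton_eq, hCsp]⟩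

lemma circuit_iff_isCircuit : Circuit M C ↔ M.IsCircuit C :=
  Matroid.isCircuit_iff.symm

lemma rank_eq_ncard (hB : M.IsBase B) : rank M = B.ncard := by
  have hcards : {n | ∃ B', M.IsBase B' ∧ B'.ncard = n} = {B.ncard} := by
    ext n
    exact ⟨fun ⟨B', hB', hn⟩ => hn ▸ hB'.ncard_eq_ncard_of_isBase hB,
      fun hn => ⟨B, hB, hn.symm⟩⟩
  rw [rank, hcards, csInf_singleton]

lemma rankFinite_of_rank_ne_zero (h : rank M ≠ 0) : M.RankFinite := by
  obtain ⟨B, hB⟩ := M.exists_isBase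
  exact hB.rankFinite_of_finite (Set.finite_of_ncard_ne_zero (rank_eq_ncard hB ▸ h))

lemma Simple.two_lt_ncard_of_isCircuit (hM : Simple M) (hC : M.IsCircuit C)
    (hCfin : C.Finite) : 2 < C.ncard := by
  have hCE := hC.subset_ground
  obtain ⟨a, ha⟩ := hC.nonempty
  obtain ⟨b, hb, hba⟩ : ∃ b ∈ C, b ≠ a := by
    by_contra! h
    exact hC.not_indep ((hM a (hCE ha) a (hCE ha)).subset fun x hx => .inl (h x hx))
  have hab : {a, b} ⊂ C := (Set.pair_subset ha hb).ssubset_of_ne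
    fun h => hC.not_indep (h ▸ hM a (hCE ha) b (hCE hb))
  calc 2 = ({a, b} : Set α).ncard := (Set.ncard_pair hba.symm).symm
    _ < C.ncard := Set.ncard_lt_ncard hab hCfin

theorem _root_.Matroid.IsCircuit.ncard_eq_rank_add_one [M.RankFinite] (hC : M.IsCircuit C)
    (hCsp : M.closure C = M.E) (he : e ∈ C) : C.ncard = rank M + 1 := by
  rw [rank_eq_ncard (hC.isBase_sdiff_singleton hCsp he),
    Set.ncard_sdiff_singleton_add_one he hC.finite]

lemma Representable.dep_symmDiff (hM : Representable M (ZMod 2)) (hC₁ : M.IsCircuit C₁)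
    (hC₂ : M.IsCircuit C₂) (hC₁fin : C₁.Finite) (hC₂fin : C₂.Finite)
    (hne : C₁ ≠ C₂) :
    M.Dep (C₁ ∆ C₂) := by
  classical
  obtain ⟨ι, v, hv⟩ := hM
  have hsum : ∀ C : Finset α, M.IsCircuit C → ∑ x ∈ C, v x = 0 := fun C hC =>
    Finset.sum_eq_zero_of_minimal_linearDepOn
      (fun h => hC.not_indep ((hv _ hC.subset_ground).2 h)) fun x hx => by
        rw [Finset.coe_erase]
        exact (hv _ (Set.sdiff_subset.trans hC.subset_ground)).1 (hC.sdiff_singleton_indep hx)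
  lift C₁ to Finset α using hC₁fin
  lift C₂ to Finset α using hC₂fin
  rw [← Finset.coe_symmDiff]
  refine ⟨fun hind => ?_, ?_⟩
  · have hempty := Finset.eq_empty_of_linearIndepOn_of_sum_eq_zero
      ((hv _ hind.subset_ground).1 hind)
      (by rw [Finset.sum_symmDiff_of_char_two, hsum _ hC₁, hsum _ hC₂, add_zero])
    exact hne (Finset.coe_inj.2 (symmDiff_eq_bot.1 hempty))
  · rw [Finset.coe_symmDiff]
    exact symmDiff_le_sup.trans (Set.union_subset hC₁.subset_ground hC₂.subset_ground)

theorem ground_subset_of_freeElt_mem_isCircuit [M.RankFinite] (hsimple : Simple M)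
    (hbinary : Representable M (ZMod 2)) (hfree : FreeElt M e) (hC : M.IsCircuit C)
    (heC : e ∈ C) : M.E ⊆ C := by
  intro f hf
  by_contra hfC
  have hCsp := hfree.2 C (circuit_iff_isCircuit.2 hC) heC
  have hB := hC.isBase_sdiff_singleton hCsp heC
  set Cf := M.fundCircuit f (C \ {e})
  have hCf : M.IsCircuit Cf := hB.fundCircuit_isCircuit hf fun hf' => hfC hf'.1
  have hCf_sub : Cf ⊆ insert f (C \ {e}) := M.fundCircuit_subset_insert f _
  have hfCf : f ∈ Cf := M.mem_fundCircuit f _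
  have hCf_large := hsimple.two_lt_ncard_of_isCircuit hCf hCf.finite
  obtain ⟨C', hC'_sub, hC'⟩ := (hbinary.dep_symmDiff hC hCf hC.finite hCf.finite
    fun h => hfC (h ▸ hfCf)).exists_isCircuit_subset
  by_cases heC' : e ∈ C'
  · have hC'_card :=
      hC'.ncard_eq_rank_add_one (hfree.2 _ (circuit_iff_isCircuit.2 hC') heC') heC'
    have hlt := Set.ncard_symmDiff_lt (fun x hx => (hCf_sub hx.1).resolve_left hx.2 |>.1)
      hCf_large hC.finite
    have hle := Set.ncard_le_ncard hC'_sub (hC.finite.union hCf.finite |>.subset symmDiff_le_sup)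
    rw [hC.ncard_eq_rank_add_one hCsp heC] at hlt
    omega
  · have hC'_eq : C' = Cf := hC'.eq_fundCircuit_of_subset hB.indep fun x hx => by
      rcases hC'_sub hx with ⟨hxC, -⟩ | ⟨hxCf, -⟩
      · exact .inr ⟨hxC, fun hxe => heC' (hxe ▸ hx)⟩
      · exact hCf_sub hxCf
    obtain ⟨g, hg, hgf⟩ := Set.exists_ne_of_one_lt_ncard (s := Cf) (by omega) f
    have hgC : g ∈ C := ((hCf_sub hg).resolve_left hgf).1
    rcases hC'_sub (hC'_eq ▸ hg) with ⟨-, hg_notMem_Cf⟩ | ⟨-, hg_notMem_C⟩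
    · exact hg_notMem_Cf hg
    · exact hg_notMem_C hgC

/-- Proposition 2.1(i): a simple binary matroid with no coloops
and rank at least two that has a free element is a circuit. -/
theorem binary_free_element {α : Type*} (M : Matroid α) (hsimple : Simple M)
    (hbinary : Representable M (ZMod 2)) (hcoloops : NoColoops M)
    (hrank : 2 ≤ rank M) (e : α) (hfree : FreeElt M e) :
    Circuit M M.E := by
  have : M.RankFinite := rankFinite_of_rank_ne_zero (by omega)
  obtain ⟨B, hB, heB⟩ : ∃ B, M.IsBase B ∧ e ∉ B := by
    by_contra! h
    exact hcoloops e ⟨hfree.1, h⟩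
  have hC := hB.fundCircuit_isCircuit hfree.1 heB
  have hE : M.E = M.fundCircuit e B := (ground_subset_of_freeElt_mem_isCircuit hsimple hbinary
    hfree hC (M.mem_fundCircuit e B)).antisymm hC.subset_ground
  rw [circuit_iff_isCircuit, hE]
  exact hC

end LoosePaper
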